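/- The variational inequality formulation of dynamic user equilibrium is equivalent to the nonlinear complementarity problem: 0 ≤ h*_p(t) ⟂ Ψ_p(t,h*) − v_ij ≥ 0 for a.e. t and all p ∈ P_ij, together with the demand satisfaction constraints Σ_{p∈P_ij} ∫ h*_p(t) dt = Q_ij with multipliers v_ij ≥ 0 for all O-D pairs (i,j). -/

import Mathlib

/-!
NCP ⇒ VI: on each path, `h*_p (Ψ_p - v) = 0` and `(Ψ_p - v) h_p ≥ 0` give
`∫ Ψ_p (h_p - h*_p) ≥ v (∫ h_p - ∫ h*_p)`, and these lower bounds cancel within each O-D pair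
because `h` and `h*` serve the same demand.

VI ⇒ NCP: take `v_w` to be the average cost `L_w(h*) / Q_w`, where `L_w(h) = ∑_{p ∈ P_w} ∫ Ψ_p h_p`.
If some `Ψ_p` were below `v_w` on a set `B` of positive measure, routing the whole demand `Q_w`
along `p`, spread uniformly over `B`, would cost less than `L_w(h*)`, contradicting the VI.
Hence `Ψ_p ≥ v_w` a.e., so every `∫ h*_p (Ψ_p - v_w)` is nonnegative; they sum over `P_w` to
`L_w(h*) - v_w Q_w = 0`, which forces complementarity.
-/

open MeasureTheory Set

section

variable {α : Type*} [MeasurableSpace α] {μ : Measure α}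

theorem exists_integral_mul_lt_of_measure_setOf_lt_pos [IsFiniteMeasure μ] {f : α → ℝ}
    {a m : ℝ} (hf : Measurable f) (hfi : Integrable f μ) (hB : 0 < μ {t | f t < a})
    (hm : 0 < m) :
    ∃ g : α → ℝ, MemLp g 2 μ ∧ 0 ≤ᵐ[μ] g ∧ ∫ t, g t ∂μ = m ∧ ∫ t, f t * g t ∂μ < a * m := by
  set B := {t | f t < a}
  have hBm : MeasurableSet B := measurableSet_lt hf measurable_const
  have hB' : 0 < μ.real B := ENNReal.toReal_pos hB.ne' (measure_ne_top μ B)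
  set c := m / μ.real B
  have hc : 0 < c := div_pos hm hB'
  have hfB : ∫ t in B, f t ∂μ < a * μ.real B := by
    have hpos : 0 < ∫ t in B, (a - f t) ∂μ := by
      have hsupp : (Function.support fun t => a - f t) ∩ B = B :=
        inter_eq_right.mpr fun t (ht : f t < a) => sub_ne_zero.mpr ht.ne'
      rw [setIntegral_pos_iff_support_of_nonneg_ae, hsupp]
      · exact hB
      · exact (ae_restrict_mem hBm).mono fun t (ht : f t < a) => sub_nonneg.mpr ht.le
      · exact ((integrable_const a).sub hfi).integrableOn
    rwa [integral_sub (integrable_const a).integrableOn hfi.integrableOn, setIntegral_const,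
      smul_eq_mul, mul_comm, sub_pos] at hpos
  refine ⟨B.indicator fun _ => c, memLp_indicator_const 2 hBm c (.inr (measure_ne_top μ B)),
    .of_forall fun t => indicator_nonneg (fun _ _ => hc.le) t, ?_, ?_⟩
  · rw [integral_indicator_const c hBm, smul_eq_mul, mul_div_cancel₀ _ hB'.ne']
  · calc ∫ t, f t * B.indicator (fun _ => c) t ∂μ = c * ∫ t in B, f t ∂μ := by
          simp_rw [← indicator_mul_right]
          rw [integral_indicator hBm, integral_mul_const, mul_comm]
      _ < c * (a * μ.real B) := by gcongr
      _ = a * m := by rw [mul_left_comm, div_mul_cancel₀ _ hB'.ne']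

theorem integral_mul_sub_eq_of_complementarity [IsFiniteMeasure μ] {f g k : α → ℝ} {v : ℝ}
    (hf : MemLp f 2 μ) (hg : MemLp g 2 μ) (hk : MemLp k 2 μ)
    (hcompl : ∀ᵐ t ∂μ, k t * (f t - v) = 0) :
    ∫ t, f t * (g t - k t) ∂μ = ∫ t, (f t - v) * g t ∂μ + v * (∫ t, g t ∂μ - ∫ t, k t ∂μ) := by
  have hfv : MemLp (fun t => f t - v) 2 μ := hf.sub (memLp_const v)
  have hfvg : Integrable (fun t => (f t - v) * g t) μ := hfv.integrable_mul hg
  have hgk : Integrable (fun t => v * (g t - k t)) μ :=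
    ((hg.integrable one_le_two).sub (hk.integrable one_le_two)).const_mul v
  rw [← integral_sub (hg.integrable one_le_two) (hk.integrable one_le_two), ← integral_const_mul,
    ← integral_add hfvg hgk]
  refine integral_congr_ae (hcompl.mono fun t ht => ?_)
  linear_combination -ht

end

theorem Finset.sum_mul_sub_eq_zero_of_sum_fiber_eq {ι W : Type*} [DecidableEq W] (s : Finset ι)
    (od : ι → W) (v : W → ℝ) {a b : ι → ℝ}
    (h : ∀ w, ∑ p ∈ s with od p = w, a p = ∑ p ∈ s with od p = w, b p) :
    ∑ p ∈ s, v (od p) * (a p - b p) = 0 := by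
  rw [← Finset.sum_fiberwise_of_maps_to (t := s.image od) fun p => Finset.mem_image_of_mem od]
  refine Finset.sum_eq_zero fun w _ => ?_
  rw [Finset.sum_congr rfl fun p hp => by rw [(Finset.mem_filter.mp hp).2], ← Finset.mul_sum,
    Finset.sum_sub_distrib, h w, sub_self, mul_zero]

section PathFlows

variable {α ι W : Type*} [MeasurableSpace α] {μ : Measure α} [Fintype ι] [DecidableEq W]
  {od : ι → W} {Q : W → ℝ} {c hstar : ι → α → ℝ}

def feasibleFlows (μ : Measure α) (od : ι → W) (Q : W → ℝ) : Set (ι → α → ℝ) :=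
  {h | (∀ p, MemLp (h p) 2 μ) ∧ (∀ p, 0 ≤ᵐ[μ] h p) ∧
    (∀ w, ∑ p ∈ Finset.univ.filter (fun p => od p = w), ∫ t, h p t ∂μ = Q w)}

theorem sum_integral_mul_sub_nonneg_of_complementarity [IsFiniteMeasure μ] {h : ι → α → ℝ}
    {v : W → ℝ} (hc : ∀ p, MemLp (c p) 2 μ) (hstar_mem : hstar ∈ feasibleFlows μ od Q)
    (h_mem : h ∈ feasibleFlows μ od Q)
    (hcompl : ∀ p, ∀ᵐ t ∂μ, 0 ≤ c p t - v (od p) ∧ hstar p t * (c p t - v (od p)) = 0) :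
    0 ≤ ∑ p, ∫ t, c p t * (h p t - hstar p t) ∂μ := by
  obtain ⟨hsL2, -, hsQ⟩ := hstar_mem
  obtain ⟨hhL2, hh0, hhQ⟩ := h_mem
  calc (0 : ℝ) = ∑ p, v (od p) * (∫ t, h p t ∂μ - ∫ t, hstar p t ∂μ) :=
        (Finset.univ.sum_mul_sub_eq_zero_of_sum_fiber_eq od v fun w =>
          (hhQ w).trans (hsQ w).symm).symm
    _ ≤ ∑ p, ∫ t, c p t * (h p t - hstar p t) ∂μ := by
        refine Finset.sum_le_sum fun p _ => ?_
        rw [integral_mul_sub_eq_of_complementarity (hc p) (hhL2 p) (hsL2 p)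
          ((hcompl p).mono fun t ht => ht.2)]
        refine le_add_of_nonneg_left (integral_nonneg_of_ae ?_)
        filter_upwards [hcompl p, hh0 p] with t ht hht
        exact mul_nonneg ht.1 hht

section Reroute

variable [DecidableEq ι]

def reroute (od : ι → W) (hstar : ι → α → ℝ) (p : ι) (g : α → ℝ) : ι → α → ℝ :=
  fun q => if od q = od p then if q = p then g else 0 else hstar q

theorem reroute_mem_feasibleFlows {p : ι} {g : α → ℝ} (hstar_mem : hstar ∈ feasibleFlows μ od Q)
    (hg : MemLp g 2 μ) (hg0 : 0 ≤ᵐ[μ] g) (hgQ : ∫ t, g t ∂μ = Q (od p)) :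
    reroute od hstar p g ∈ feasibleFlows μ od Q := by
  obtain ⟨hsL2, hs0, hsQ⟩ := hstar_mem
  refine ⟨fun q => ?_, fun q => ?_, fun w => ?_⟩
  · unfold reroute
    split_ifs
    exacts [hg, MemLp.zero, hsL2 q]
  · unfold reroute
    split_ifs
    exacts [hg0, .rfl, hs0 q]
  · by_cases hw : od p = w
    · subst hw
      have hfiber : ∀ q ∈ Finset.univ.filter (fun q => od q = od p),
          ∫ t, reroute od hstar p g q t ∂μ = if q = p then ∫ t, g t ∂μ else 0 := by
        intro q hq
        rw [reroute, if_pos (Finset.mem_filter.mp hq).2]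
        split_ifs <;> simp
      rw [Finset.sum_congr rfl hfiber, Finset.sum_ite_eq', if_pos (by simp), hgQ]
    · rw [← hsQ w]
      refine Finset.sum_congr rfl fun q hq => ?_
      rw [reroute, if_neg ((Finset.mem_filter.mp hq).2.trans_ne (Ne.symm hw))]

theorem sum_integral_mul_reroute_sub [IsFiniteMeasure μ] {p : ι} {g : α → ℝ}
    (hc : ∀ q, MemLp (c q) 2 μ) (hsL2 : ∀ q, MemLp (hstar q) 2 μ) (hg : MemLp g 2 μ) :
    ∑ q, ∫ t, c q t * (reroute od hstar p g q t - hstar q t) ∂μ =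
      ∫ t, c p t * g t ∂μ - ∑ q ∈ Finset.univ.filter (fun q => od q = od p),
        ∫ t, c q t * hstar q t ∂μ := by
  have hterm : ∀ q, ∫ t, c q t * (reroute od hstar p g q t - hstar q t) ∂μ =
      if od q = od p then (if q = p then ∫ t, c p t * g t ∂μ else 0) - ∫ t, c q t * hstar q t ∂μ
      else 0 := by
    intro q
    unfold reroute
    split_ifs with hq hqp
    · subst hqp
      simp_rw [mul_sub]
      exact integral_sub ((hc q).integrable_mul hg) ((hc q).integrable_mul (hsL2 q))
    · simp [integral_neg]
    · simp
  rw [Finset.sum_congr rfl fun q _ => hterm q, ← Finset.sum_filter, Finset.sum_sub_distrib,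
    Finset.sum_ite_eq', if_pos (by simp)]

end Reroute

noncomputable def odCost (μ : Measure α) (od : ι → W) (Q : W → ℝ) (c hstar : ι → α → ℝ)
    (w : W) : ℝ :=
  (∑ p ∈ Finset.univ.filter (fun p => od p = w), ∫ t, c p t * hstar p t ∂μ) / Q w

theorem odCost_nonneg (hc0 : ∀ p, 0 ≤ᵐ[μ] c p) (hstar_mem : hstar ∈ feasibleFlows μ od Q)
    (w : W) :
    0 ≤ odCost μ od Q c hstar w := by
  obtain ⟨-, hs0, hsQ⟩ := hstar_mem
  have hnonneg : ∀ p, 0 ≤ᵐ[μ] fun t => c p t * hstar p t := fun p => by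
    filter_upwards [hc0 p, hs0 p] with t hct hst
    exact mul_nonneg hct hst
  refine div_nonneg (Finset.sum_nonneg fun p _ => integral_nonneg_of_ae (hnonneg p)) ?_
  exact hsQ w ▸ Finset.sum_nonneg fun p _ => integral_nonneg_of_ae (hs0 p)

theorem odCost_mul (hQ : ∀ w, 0 < Q w) (w : W) :
    odCost μ od Q c hstar w * Q w =
      ∑ p ∈ Finset.univ.filter (fun p => od p = w), ∫ t, c p t * hstar p t ∂μ :=
  div_mul_cancel₀ _ (hQ w).ne'

theorem ae_odCost_le_of_forall_le_sum [IsFiniteMeasure μ] (hQ : ∀ w, 0 < Q w)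
    (hcm : ∀ p, Measurable (c p)) (hc : ∀ p, MemLp (c p) 2 μ)
    (hstar_mem : hstar ∈ feasibleFlows μ od Q)
    (hVI : ∀ h ∈ feasibleFlows μ od Q, 0 ≤ ∑ p, ∫ t, c p t * (h p t - hstar p t) ∂μ) (p : ι) :
    ∀ᵐ t ∂μ, odCost μ od Q c hstar (od p) ≤ c p t := by
  classical
  set v := odCost μ od Q c hstar (od p)
  by_contra hne
  have hB : 0 < μ {t | c p t < v} := by
    simpa only [ae_iff, not_le, pos_iff_ne_zero] using hne
  obtain ⟨g, hg, hg0, hgQ, hlt⟩ := exists_integral_mul_lt_of_measure_setOf_lt_pos (hcm p)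
    ((hc p).integrable one_le_two) hB (hQ (od p))
  have hcost := hVI _ (reroute_mem_feasibleFlows hstar_mem hg hg0 hgQ)
  rw [sum_integral_mul_reroute_sub hc hstar_mem.1 hg, ← odCost_mul hQ] at hcost
  linarith

theorem ae_mul_sub_odCost_eq_zero [IsFiniteMeasure μ] (hQ : ∀ w, 0 < Q w)
    (hc : ∀ p, MemLp (c p) 2 μ) (hstar_mem : hstar ∈ feasibleFlows μ od Q)
    (hle : ∀ p, ∀ᵐ t ∂μ, odCost μ od Q c hstar (od p) ≤ c p t) (p : ι) :
    ∀ᵐ t ∂μ, hstar p t * (c p t - odCost μ od Q c hstar (od p)) = 0 := by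
  set v := odCost μ od Q c hstar
  obtain ⟨hsL2, hs0, hsQ⟩ := hstar_mem
  have hnonneg : ∀ q, 0 ≤ᵐ[μ] fun t => hstar q t * (c q t - v (od q)) := fun q => by
    filter_upwards [hs0 q, hle q] with t hst hct
    exact mul_nonneg hst (sub_nonneg.mpr hct)
  have hint : ∀ q, Integrable (fun t => hstar q t * (c q t - v (od q))) μ := fun q =>
    (hsL2 q).integrable_mul ((hc q).sub (memLp_const _))
  have hsplit : ∀ q, ∫ t, hstar q t * (c q t - v (od q)) ∂μ =
      ∫ t, c q t * hstar q t ∂μ - v (od q) * ∫ t, hstar q t ∂μ := fun q => by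
    have hcs : Integrable (fun t => c q t * hstar q t) μ := (hc q).integrable_mul (hsL2 q)
    rw [← integral_const_mul, ← integral_sub hcs ((hsL2 q).integrable one_le_two |>.const_mul _)]
    exact integral_congr_ae (.of_forall fun t => by ring)
  have hsum : ∑ q ∈ Finset.univ.filter (fun q => od q = od p),
      ∫ t, hstar q t * (c q t - v (od q)) ∂μ = 0 := by
    rw [Finset.sum_congr rfl fun q hq => by rw [hsplit, (Finset.mem_filter.mp hq).2],
      Finset.sum_sub_distrib, ← Finset.mul_sum, hsQ, odCost_mul hQ, sub_self]
  have hzero := (Finset.sum_eq_zero_iff_of_nonneg fun q _ => integral_nonneg_of_ae (hnonneg q)).mp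
    hsum p (by simp)
  exact (integral_eq_zero_iff_of_nonneg_ae (hnonneg p) (hint p)).mp hzero

theorem forall_le_sum_iff_exists_complementarity [IsFiniteMeasure μ] (hQ : ∀ w, 0 < Q w)
    (hcm : ∀ p, Measurable (c p)) (hc : ∀ p, MemLp (c p) 2 μ) (hc0 : ∀ p, 0 ≤ᵐ[μ] c p)
    (hstar_mem : hstar ∈ feasibleFlows μ od Q) :
    (∀ h ∈ feasibleFlows μ od Q, 0 ≤ ∑ p, ∫ t, c p t * (h p t - hstar p t) ∂μ) ↔
      ∃ v : W → ℝ, (∀ w, 0 ≤ v w) ∧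
        (∀ p, ∀ᵐ t ∂μ, 0 ≤ hstar p t ∧ 0 ≤ c p t - v (od p) ∧
          hstar p t * (c p t - v (od p)) = 0) ∧
        (∀ w, ∑ p ∈ Finset.univ.filter (fun p => od p = w), ∫ t, hstar p t ∂μ = Q w) := by
  refine ⟨fun hVI => ⟨odCost μ od Q c hstar, odCost_nonneg hc0 hstar_mem, fun p => ?_,
    hstar_mem.2.2⟩, fun ⟨v, _, hcompl, _⟩ h h_mem => ?_⟩
  · have hle := ae_odCost_le_of_forall_le_sum hQ hcm hc hstar_mem hVI
    filter_upwards [hstar_mem.2.1 p, hle p, ae_mul_sub_odCost_eq_zero hQ hc hstar_mem hle p]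
      with t hst hct hzero
    exact ⟨hst, sub_nonneg.mpr hct, hzero⟩
  · exact sum_integral_mul_sub_nonneg_of_complementarity hc hstar_mem h_mem
      fun p => (hcompl p).mono fun t ht => ht.2

end PathFlows

theorem stmt1_general
    {ι W : Type*} [Fintype ι] [DecidableEq W]
    (od : ι → W)
    (t₀ t_f : ℝ)
    (Q : W → ℝ) (hQ : ∀ w, 0 < Q w)
    (μ : Measure ℝ) (hμ : μ = volume.restrict (Icc t₀ t_f))
    (Λ : Set (ι → ℝ → ℝ))
    (hΛ : Λ = {h : ι → ℝ → ℝ |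
      (∀ p, MemLp (h p) 2 μ) ∧ (∀ p, 0 ≤ᵐ[μ] h p) ∧
      (∀ w, ∑ p ∈ Finset.univ.filter (fun p => od p = w), ∫ t, h p t ∂μ = Q w)})
    (Ψ : (ι → ℝ → ℝ) → ι → ℝ → ℝ)
    (hΨmeas : ∀ h ∈ Λ, ∀ p, Measurable (Ψ h p))
    (hΨpos : ∀ h ∈ Λ, ∀ p, ∃ c > 0, ∀ᵐ t ∂μ, c ≤ Ψ h p t)
    (hΨL2 : ∀ h ∈ Λ, ∀ p, MemLp (Ψ h p) 2 μ)
    (hstar : ι → ℝ → ℝ) (hmem : hstar ∈ Λ) :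
    (∀ h ∈ Λ, 0 ≤ ∑ p : ι, ∫ t, Ψ hstar p t * (h p t - hstar p t) ∂μ) ↔
      (∃ v : W → ℝ, (∀ w, 0 ≤ v w) ∧
        (∀ p, ∀ᵐ t ∂μ, 0 ≤ hstar p t ∧ 0 ≤ Ψ hstar p t - v (od p) ∧
          hstar p t * (Ψ hstar p t - v (od p)) = 0) ∧
        (∀ w, ∑ p ∈ Finset.univ.filter (fun p => od p = w), ∫ t, hstar p t ∂μ = Q w)) := by
  subst hμ hΛ
  have hΨ0 : ∀ p, 0 ≤ᵐ[volume.restrict (Icc t₀ t_f)] Ψ hstar p := fun p => by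
    obtain ⟨c, hc, hle⟩ := hΨpos hstar hmem p
    exact hle.mono fun t ht => hc.le.trans ht
  exact forall_le_sum_iff_exists_complementarity hQ (hΨmeas hstar hmem) (hΨL2 hstar hmem) hΨ0 hmem

/-- The variational inequality formulation of DUE is equivalent to the nonlinear
complementarity problem. -/
theorem stmt1
    {ι W : Type*} [Fintype ι] [Fintype W] [DecidableEq W]
    (od : ι → W)
    (t₀ t_f : ℝ) (ht : t₀ < t_f)
    (Q : W → ℝ) (hQ : ∀ w, 0 < Q w)
    (μ : Measure ℝ) (hμ : μ = volume.restrict (Icc t₀ t_f))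
    (Λ : Set (ι → ℝ → ℝ))
    (hΛ : Λ = {h : ι → ℝ → ℝ |
      (∀ p, MemLp (h p) 2 μ) ∧ (∀ p, 0 ≤ᵐ[μ] h p) ∧
      (∀ w, ∑ p ∈ Finset.univ.filter (fun p => od p = w), ∫ t, h p t ∂μ = Q w)})
    (Ψ : (ι → ℝ → ℝ) → ι → ℝ → ℝ)
    (hΨmeas : ∀ h ∈ Λ, ∀ p, Measurable (Ψ h p))
    (hΨpos : ∀ h ∈ Λ, ∀ p, ∃ c > 0, ∀ᵐ t ∂μ, c ≤ Ψ h p t)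
    (hΨL2 : ∀ h ∈ Λ, ∀ p, MemLp (Ψ h p) 2 μ)
    (hstar : ι → ℝ → ℝ) (hmem : hstar ∈ Λ) :
    (∀ h ∈ Λ, 0 ≤ ∑ p : ι, ∫ t, Ψ hstar p t * (h p t - hstar p t) ∂μ) ↔
      (∃ v : W → ℝ, (∀ w, 0 ≤ v w) ∧
        (∀ p, ∀ᵐ t ∂μ, 0 ≤ hstar p t ∧ 0 ≤ Ψ hstar p t - v (od p) ∧
          hstar p t * (Ψ hstar p t - v (od p)) = 0) ∧
        (∀ w, ∑ p ∈ Finset.univ.filter (fun p => od p = w), ∫ t, hstar p t ∂μ = Q w)) :=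
  stmt1_general od t₀ t_f Q hQ μ hμ Λ hΛ Ψ hΨmeas hΨpos hΨL2 hstar hmem
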